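/- arXiv:math/0607402 — 3 statements merged into one kernel-verified Lean document; each statement's English description precedes it below -/
import Mathlib

section
/- Let a > 0, C > 0, D ≥ 2 an integer, and let (Q_j)_{j≥0} be a sequence with Q_j ≥ 1 for all j, satisfying Q_{j-1} ≤ a + a√(Q_j) for all j ≥ 1 (where a ≥ 1), and Q_j ≤ C·j^(D-1) for all j ≥ 1. Then the sequence (Q_j) is bounded. -/
/-!
Put `L j = log (Q j / (2a)²)`. Since `Q j ≤ a + a √Q (j+1) ≤ 2a √Q (j+1)`, the recursion becomes
`L j ≤ L (j+1) / 2`, so `L n / 2ⁿ` is nondecreasing. On the other hand `L n ≤ Q n ≤ C n^(D-1)`,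
and `C n^(D-1) / 2ⁿ → 0`; hence `L j ≤ 0` for every `j`, i.e. `Q j ≤ (2a)²`.
-/

open Filter Topology

theorem nonpos_of_le_half_succ_of_le_pow {L : ℕ → ℝ} (hhalf : ∀ n, L n ≤ L (n + 1) / 2)
    {C : ℝ} {d : ℕ} (hgrowth : ∀ᶠ n in atTop, L n ≤ C * (n : ℝ) ^ d) (j : ℕ) : L j ≤ 0 := by
  have hmono : Monotone fun n => L n / 2 ^ n := by
    refine monotone_nat_of_le_succ fun n => ?_
    rw [pow_succ, ← div_div, div_right_comm]
    gcongr
    exact hhalf n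
  have hbound : Tendsto (fun n : ℕ => C * ((n : ℝ) ^ d / 2 ^ n)) atTop (𝓝 0) := by
    simpa using (tendsto_pow_const_div_const_pow_of_one_lt d one_lt_two).const_mul C
  have hscaled : L j / 2 ^ j ≤ 0 := by
    refine ge_of_tendsto hbound ?_
    filter_upwards [hgrowth, eventually_ge_atTop j] with n hn hjn
    calc L j / 2 ^ j ≤ L n / 2 ^ n := hmono hjn
      _ ≤ C * (n : ℝ) ^ d / 2 ^ n := by gcongr
      _ = C * ((n : ℝ) ^ d / 2 ^ n) := mul_div_assoc _ _ _
  simpa using (div_le_iff₀ (by positivity)).mp hscaled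

theorem div_sq_le_sqrt_div_sq_of_le_add_mul_sqrt {a x y : ℝ} (ha : 0 < a) (hy : 1 ≤ y)
    (h : x ≤ a + a * √y) : x / (2 * a) ^ 2 ≤ √(y / (2 * a) ^ 2) := by
  have hsqrt : 1 ≤ √y := Real.one_le_sqrt.mpr hy
  rw [Real.sqrt_div' _ (by positivity), Real.sqrt_sq (by positivity),
    div_le_div_iff₀ (by positivity) (by positivity)]
  nlinarith

theorem gp_recursive_polynomial_bounded_general (a C : ℝ) (ha : 1 ≤ a)
    (D : ℕ) (Q : ℕ → ℝ)
    (hQ1 : ∀ j, 1 ≤ Q j)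
    (hrec : ∀ j, 1 ≤ j → Q (j - 1) ≤ a + a * Real.sqrt (Q j))
    (hpoly : ∀ j, 1 ≤ j → Q j ≤ C * (j : ℝ) ^ (D - 1)) :
    ∃ M : ℝ, ∀ j, Q j ≤ M := by
  have hscale : 1 ≤ (2 * a) ^ 2 := by nlinarith
  have hpos : ∀ j, 0 < Q j / (2 * a) ^ 2 := fun j => by have := hQ1 j; positivity
  set L := fun j => Real.log (Q j / (2 * a) ^ 2)
  have hhalf : ∀ j, L j ≤ L (j + 1) / 2 := fun j => by
    rw [← Real.log_sqrt (hpos _).le]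
    exact Real.log_le_log (hpos j)
      (div_sq_le_sqrt_div_sq_of_le_add_mul_sqrt (by linarith) (hQ1 _) (hrec (j + 1) (by omega)))
  have hgrowth : ∀ᶠ j in atTop, L j ≤ C * (j : ℝ) ^ (D - 1) := by
    filter_upwards [eventually_ge_atTop 1] with j hj
    calc L j ≤ Q j / (2 * a) ^ 2 := Real.log_le_self (hpos j).le
      _ ≤ Q j := div_le_self (by linarith [hQ1 j]) hscale
      _ ≤ C * (j : ℝ) ^ (D - 1) := hpoly j hj
  refine ⟨(2 * a) ^ 2, fun j => ?_⟩
  have hL := nonpos_of_le_half_succ_of_le_pow hhalf hgrowth j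
  rwa [Real.log_nonpos_iff (hpos j).le, div_le_one (by positivity)] at hL

theorem gp_recursive_polynomial_bounded (a C : ℝ) (ha0 : 0 < a) (ha : 1 ≤ a)
    (hC : 0 < C) (D : ℕ) (hD : 2 ≤ D) (Q : ℕ → ℝ)
    (hQ1 : ∀ j, 1 ≤ Q j)
    (hrec : ∀ j, 1 ≤ j → Q (j - 1) ≤ a + a * Real.sqrt (Q j))
    (hpoly : ∀ j, 1 ≤ j → Q j ≤ C * (j : ℝ) ^ (D - 1)) :
    ∃ M : ℝ, ∀ j, Q j ≤ M :=
  gp_recursive_polynomial_bounded_general a C ha D Q hQ1 hrec hpoly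
end

section
/- Suppose (P_j)_{j≥0} is a sequence of nonnegative reals with P_j ≤ C·j^(D-1) for j ≥ 1 (C > 0, D ≥ 2), and suppose that for some constants A, B > 0 one has ∑_{l=0}^{j-1} P_l ≤ A + B·√(max(1,P_j)) for all j ≥ 1. Then ∑_{l=0}^{∞} P_l < ∞. -/
/-!
If the partial sums `S j = ∑_{l<j} P l` were unbounded, then once `S j ≥ A + B t` the hypothesis
forces `P j ≥ t²`, so `S (j + 1) ≥ A + B t + t² ≥ A + 2 B t` as soon as `t ≥ B`. Iterating, the
partial sums, and with them the terms `P j`, grow geometrically, which no polynomially bounded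
sequence can do.
-/

open Filter Asymptotics Finset

theorem sq_le_of_add_mul_le_add_mul_sqrt_max_one {A B S t p : ℝ} (hB : 0 < B) (ht : 1 < t)
    (hlow : A + B * t ≤ S) (hup : S ≤ A + B * √(max 1 p)) : t ^ 2 ≤ p := by
  have hsqrt : t ≤ √(max 1 p) := le_of_mul_le_mul_left (by linarith) hB
  have hmax : t ^ 2 ≤ max 1 p := (Real.le_sqrt (by linarith) (by positivity)).1 hsqrt
  have hone : 1 < t ^ 2 := one_lt_pow₀ ht two_ne_zero
  exact (le_max_iff.1 hmax).resolve_left hone.not_ge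

section PartialSums

variable {A B : ℝ} {P : ℕ → ℝ}
  (hrec : ∀ j, 1 ≤ j → ∑ l ∈ range j, P l ≤ A + B * √(max 1 (P j)))
include hrec

theorem add_mul_two_pow_le_sum_range (hB : 0 < B) {j₀ : ℕ} (hj₀ : 1 ≤ j₀) {t : ℝ} (ht : 1 < t)
    (hBt : B ≤ t) (hstart : A + B * t ≤ ∑ l ∈ range j₀, P l) (n : ℕ) :
    A + B * (t * 2 ^ n) ≤ ∑ l ∈ range (j₀ + n), P l := by
  induction n with
  | zero => simpa using hstart
  | succ n ih =>
    have hlt : t ≤ t * 2 ^ n := le_mul_of_one_le_right (by linarith) (one_le_pow₀ one_le_two)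
    have hP : (t * 2 ^ n) ^ 2 ≤ P (j₀ + n) :=
      sq_le_of_add_mul_le_add_mul_sqrt_max_one hB (ht.trans_le hlt) ih (hrec _ (by omega))
    have hBu : B * (t * 2 ^ n) ≤ (t * 2 ^ n) ^ 2 := by
      rw [sq]; exact mul_le_mul_of_nonneg_right (hBt.trans hlt) (by positivity)
    rw [← add_assoc, sum_range_succ, pow_succ]
    linarith

theorem isBigO_two_pow_of_not_summable (hB : 0 < B) (hP : ∀ j, 0 ≤ P j) (hns : ¬Summable P) :
    (fun j ↦ (2 : ℝ) ^ j) =O[atTop] P := by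
  have hS := (not_summable_iff_tendsto_nat_atTop_of_nonneg hP).1 hns
  obtain ⟨j₀, hstart, hj₀⟩ :=
    ((hS.eventually_ge_atTop (A + B * (B + 2))).and (eventually_ge_atTop 1)).exists
  have ht : 1 < B + 2 := by linarith
  have hgrow (n : ℕ) : (2 : ℝ) ^ n ≤ P (j₀ + n) := by
    have hu : (2 : ℝ) ^ n ≤ (B + 2) * 2 ^ n := le_mul_of_one_le_left (by positivity) ht.le
    have hone : (1 : ℝ) ≤ 2 ^ n := one_le_pow₀ one_le_two
    have hsq := sq_le_of_add_mul_le_add_mul_sqrt_max_one hB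
      (ht.trans_le (le_mul_of_one_le_right (by linarith) hone))
      (add_mul_two_pow_le_sum_range hrec hB hj₀ ht (by linarith) hstart n) (hrec _ (by omega))
    exact hu.trans ((le_self_pow₀ (hone.trans hu) two_ne_zero).trans hsq)
  refine .of_bound (2 ^ j₀) ((eventually_ge_atTop j₀).mono fun j hj ↦ ?_)
  obtain ⟨n, rfl⟩ := Nat.exists_eq_add_of_le hj
  rw [Real.norm_of_nonneg (by positivity), Real.norm_of_nonneg (hP _), pow_add]
  exact mul_le_mul_of_nonneg_left (hgrow n) (by positivity)

end PartialSums

theorem summable_of_isBigO_pow_of_sum_range_le {A B : ℝ} {P : ℕ → ℝ} (k : ℕ) (hB : 0 < B)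
    (hP : ∀ j, 0 ≤ P j) (hpoly : P =O[atTop] fun j ↦ (j : ℝ) ^ k)
    (hrec : ∀ j, 1 ≤ j → ∑ l ∈ range j, P l ≤ A + B * √(max 1 (P j))) : Summable P := by
  by_contra hns
  have hexp := isBigO_two_pow_of_not_summable hrec hB hP hns
  exact isLittleO_irrefl (.of_forall fun j ↦ pow_ne_zero j two_ne_zero)
    ((hexp.trans hpoly).trans_isLittleO (isLittleO_pow_const_const_pow_of_one_lt k one_lt_two))

theorem gp_potential_summable_general (C A B : ℝ) (hB : 0 < B)
    (D : ℕ) (P : ℕ → ℝ) (hP : ∀ j, 0 ≤ P j)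
    (hpoly : ∀ j, 1 ≤ j → P j ≤ C * (j : ℝ) ^ (D - 1))
    (hrec : ∀ j, 1 ≤ j →
      ∑ l ∈ Finset.range j, P l ≤ A + B * Real.sqrt (max 1 (P j))) :
    Summable P := by
  refine summable_of_isBigO_pow_of_sum_range_le (D - 1) hB hP ?_ hrec
  refine .of_bound C ((eventually_ge_atTop 1).mono fun j hj ↦ ?_)
  rw [Real.norm_of_nonneg (hP j), Real.norm_of_nonneg (by positivity)]
  exact hpoly j hj

theorem gp_potential_summable (C A B : ℝ) (hC : 0 < C) (hA : 0 < A) (hB : 0 < B)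
    (D : ℕ) (hD : 2 ≤ D) (P : ℕ → ℝ) (hP : ∀ j, 0 ≤ P j)
    (hpoly : ∀ j, 1 ≤ j → P j ≤ C * (j : ℝ) ^ (D - 1))
    (hrec : ∀ j, 1 ≤ j →
      ∑ l ∈ Finset.range j, P l ≤ A + B * Real.sqrt (max 1 (P j))) :
    Summable P :=
  gp_potential_summable_general C A B hB D P hP hpoly hrec
end

section
/- If (P_j)_{j≥0} is a sequence of nonnegative reals with ∑_{l=0}^{∞} P_l = +∞ and such that ∑_{l=0}^{j-1} P_l ≤ A + B·√(max(1,P_j)) for all j (A, B > 0), then P_j → +∞ as j → ∞. -/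
theorem gp_divergence_forces_blowup (A B : ℝ) (hA : 0 < A) (hB : 0 < B)
    (P : ℕ → ℝ) (hP : ∀ j, 0 ≤ P j) (hdiv : ¬ Summable P)
    (hrec : ∀ j, ∑ l ∈ Finset.range j, P l ≤ A + B * Real.sqrt (max 1 (P j))) :
    Filter.Tendsto P Filter.atTop Filter.atTop := by
  have hS : Filter.Tendsto (fun n => ∑ i ∈ Finset.range n, P i) Filter.atTop Filter.atTop :=
    (not_summable_iff_tendsto_nat_atTop_of_nonneg hP).mp hdiv
  have h2 : Filter.Tendsto (fun n => ((∑ i ∈ Finset.range n, P i) - A) / B - 1)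
      Filter.atTop Filter.atTop := by
    apply Filter.tendsto_atTop_add_const_right
    apply Filter.Tendsto.atTop_div_const hB
    exact Filter.tendsto_atTop_add_const_right _ _ hS
  apply Filter.tendsto_atTop_mono _ h2
  intro n
  have h3 := hrec n
  have hm : (1 : ℝ) ≤ max 1 (P n) := le_max_left _ _
  have hs : Real.sqrt (max 1 (P n)) ≤ max 1 (P n) := by
    have h1 := Real.sq_sqrt (le_trans zero_le_one hm)
    have h2 : 1 ≤ Real.sqrt (max 1 (P n)) := by
      have := Real.sqrt_le_sqrt hm
      simpa using this
    nlinarith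
  have hmax : max 1 (P n) ≤ P n + 1 := by
    rcases max_cases 1 (P n) with ⟨h, _⟩ | ⟨h, _⟩ <;> simp [h] <;> linarith [hP n]
  have hdiv2 : ((∑ i ∈ Finset.range n, P i) - A) / B ≤ Real.sqrt (max 1 (P n)) := by
    rw [div_le_iff₀ hB]
    linarith [h3]
  nlinarith [hdiv2, hs, hmax]
end
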